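/- arXiv:1803.10469 — 4 statements merged into one kernel-verified Lean document; each statement's English description precedes it below -/
import Mathlib

section
/- For A ∈ ℝ^{n×n}, the linear map x ↦ Ax is averaged (η-averaged in some P-induced norm for some η ∈ (0,1)) if and only if for every x(0) ∈ ℝⁿ the sequence x(k+1) = A x(k) converges to some point of ker(I − A). -/
/-!
(⇒) With `c = (1 - e) / e`, averagedness reads `‖A z‖²_P + c ‖(I - A) z‖²_P ≤ ‖z‖²_P`. Applied to
`z = x k - w` for a fixed point `w`, it makes `‖x k - w‖_P` nonincreasing and forces
`(I - A) x k → 0`. Hence the bounded orbit has a cluster point, this cluster point is fixed, and the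
nonincreasing distances to it then send the whole orbit to it.

(⇐) If every orbit converges then `A ^ k → E` with `A E = E A = E² = E`, so `N = A - E` has
`N ^ k → 0` and a quadratic Lyapunov form `Q` with `‖N v‖_Q ≤ √ρ ‖v‖_Q`, `ρ < 1`. In the norm
`‖z‖²_P = |E z|² + ‖(I - E) z‖²_Q` the map `T = (A - (1 - η) I) / η`, `η = (1 + √ρ) / 2`, is
nonexpansive: it fixes `E z`, and on `(I - E) z` it acts as `(N - (1 - η) I) / η`, of `Q`-norm at
most `(√ρ + 1 - η) / η = 1`. So `A = (1 - η) I + η T` is `η`-averaged.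
-/

open Matrix Filter Finset Polynomial

noncomputable def cmat {m : Type*} [Fintype m] [DecidableEq m]
    (A : Matrix m m ℝ) : Matrix m m ℂ := A.map (fun a => (a : ℂ))

/-- `lam` is a (complex) eigenvalue of the real matrix `A`. -/
def IsEig {m : Type*} [Fintype m] [DecidableEq m]
    (A : Matrix m m ℝ) (lam : ℂ) : Prop := (cmat A).charpoly.IsRoot lam

/-- algebraic multiplicity of `lam` as an eigenvalue of `A`. -/
noncomputable def algMult {m : Type*} [Fintype m] [DecidableEq m]
    (A : Matrix m m ℝ) (lam : ℂ) : ℕ := (cmat A).charpoly.rootMultiplicity lam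

/-- geometric multiplicity of `lam` as an eigenvalue of `A`. -/
noncomputable def geomMult {m : Type*} [Fintype m] [DecidableEq m]
    (A : Matrix m m ℝ) (lam : ℂ) : ℕ :=
  Module.finrank ℂ (LinearMap.ker (Matrix.toLin' (cmat A) - lam • LinearMap.id))

/-- quadratic form `xᵀ P x`, i.e. `‖x‖_P²`. -/
noncomputable def qf {m : Type*} [Fintype m] (P : Matrix m m ℝ) (x : m → ℝ) : ℝ :=
  x ⬝ᵥ P.mulVec x

/-- the norm `‖x‖_P = √(xᵀ P x)`. -/
noncomputable def pnorm {m : Type*} [Fintype m] (P : Matrix m m ℝ) (x : m → ℝ) : ℝ :=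
  Real.sqrt (qf P x)

open Topology

section QuadraticForm

variable {m : Type*} [Fintype m]

lemma dotProduct_self_nonneg (v : m → ℝ) : 0 ≤ v ⬝ᵥ v :=
  Finset.sum_nonneg fun i _ => mul_self_nonneg (v i)

@[simp]
lemma qf_zero (P : Matrix m m ℝ) : qf P 0 = 0 := by
  simp [qf]

lemma qf_nonneg {P : Matrix m m ℝ} (hP : P.PosSemidef) (v : m → ℝ) : 0 ≤ qf P v := by
  simpa [qf] using hP.dotProduct_mulVec_nonneg v

lemma qf_smul (P : Matrix m m ℝ) (c : ℝ) (v : m → ℝ) : qf P (c • v) = c ^ 2 * qf P v := by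
  simp only [qf, mulVec_smul, dotProduct_smul, smul_dotProduct, smul_eq_mul]
  ring

lemma qf_add (P₁ P₂ : Matrix m m ℝ) (v : m → ℝ) : qf (P₁ + P₂) v = qf P₁ v + qf P₂ v := by
  simp [qf, add_mulVec, dotProduct_add]

lemma qf_sum {ι : Type*} (s : Finset ι) (P : ι → Matrix m m ℝ) (v : m → ℝ) :
    qf (∑ i ∈ s, P i) v = ∑ i ∈ s, qf (P i) v := by
  simp [qf, sum_mulVec, dotProduct_sum]

lemma qf_conjTranspose_mul_mul (B Q : Matrix m m ℝ) (v : m → ℝ) :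
    qf (Bᴴ * Q * B) v = qf Q (B *ᵥ v) := by
  rw [qf, qf, ← mulVec_mulVec, ← mulVec_mulVec, dotProduct_mulVec,
    conjTranspose_eq_transpose_of_trivial, vecMul_transpose]

lemma qf_conjTranspose_mul_self (B : Matrix m m ℝ) (v : m → ℝ) :
    qf (Bᴴ * B) v = (B *ᵥ v) ⬝ᵥ (B *ᵥ v) := by
  rw [qf, ← mulVec_mulVec, dotProduct_mulVec, conjTranspose_eq_transpose_of_trivial,
    vecMul_transpose]

lemma qf_one_sub_smul_add_smul (P : Matrix m m ℝ) (η : ℝ) (z t : m → ℝ) :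
    qf P ((1 - η) • z + η • t) =
      (1 - η) * qf P z + η * qf P t - η * (1 - η) * qf P (z - t) := by
  simp only [qf, mulVec_add, mulVec_sub, mulVec_smul, dotProduct_add, add_dotProduct,
    dotProduct_sub, sub_dotProduct, dotProduct_smul, smul_dotProduct, smul_eq_mul]
  ring

lemma continuous_qf (P : Matrix m m ℝ) : Continuous (qf P) :=
  continuous_id.dotProduct (continuous_const.matrix_mulVec continuous_id)

lemma sqrt_qf_add_le {Q : Matrix m m ℝ} (hQ : Q.PosSemidef) (u v : m → ℝ) :
    √(qf Q (u + v)) ≤ √(qf Q u) + √(qf Q v) := by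
  let N := Q.toSeminormedAddCommGroup hQ
  have hnorm : ∀ w, N.norm w = √(qf Q w) := fun w => by
    change √(RCLike.re ((Q *ᵥ w) ⬝ᵥ star w)) = _
    simp [qf, dotProduct_comm]
  simpa only [hnorm] using @norm_add_le _ N.toSeminormedAddGroup u v

lemma qf_mulVec_sub_smul_le {Q N : Matrix m m ℝ} (hQ : Q.PosSemidef) {ρ s : ℝ} (hs : 0 ≤ s)
    (hN : ∀ v, qf Q (N *ᵥ v) ≤ ρ * qf Q v) (v : m → ℝ) :
    qf Q (N *ᵥ v - s • v) ≤ (√ρ + s) ^ 2 * qf Q v := by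
  have hq := qf_nonneg hQ v
  have hNv : √(qf Q (N *ᵥ v)) ≤ √ρ * √(qf Q v) :=
    (Real.sqrt_le_sqrt (hN v)).trans_eq (Real.sqrt_mul' ρ hq)
  have hsv : √(qf Q (-(s • v))) = s * √(qf Q v) := by
    rw [← neg_smul, qf_smul, Real.sqrt_mul' _ hq, neg_sq, Real.sqrt_sq hs]
  have htri := sqrt_qf_add_le hQ (N *ᵥ v) (-(s • v))
  rw [← sub_eq_add_neg] at htri
  rw [← Real.sqrt_le_sqrt_iff (by positivity), Real.sqrt_mul' _ hq, Real.sqrt_sq (by positivity)]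
  linarith

lemma Matrix.PosDef.exists_pos_mul_sq_norm_le_qf {P : Matrix m m ℝ} (hP : P.PosDef) :
    ∃ μ > 0, ∀ v, μ * ‖v‖ ^ 2 ≤ qf P v := by
  by_cases hS : (Metric.sphere (0 : m → ℝ) 1).Nonempty
  · obtain ⟨u, hu, hmin⟩ :=
      (isCompact_sphere (0 : m → ℝ) 1).exists_isMinOn hS (continuous_qf P).continuousOn
    have hu0 : u ≠ 0 := ne_zero_of_mem_unit_sphere ⟨u, hu⟩
    refine ⟨qf P u, by simpa [qf] using hP.dotProduct_mulVec_pos hu0, fun v => ?_⟩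
    rcases eq_or_ne v 0 with rfl | hv
    · simp
    have hv' : 0 < ‖v‖ := norm_pos_iff.2 hv
    have hmin_v := hmin (show ‖v‖⁻¹ • v ∈ Metric.sphere (0 : m → ℝ) 1 by simp [norm_smul, hv'.ne'])
    rw [Set.mem_ofPred_eq, qf_smul, inv_pow, le_inv_mul_iff₀ (by positivity)] at hmin_v
    linarith
  · refine ⟨1, one_pos, fun v => ?_⟩
    rcases eq_or_ne v 0 with rfl | hv
    · simp
    exact absurd ⟨‖v‖⁻¹ • v, by simp [norm_smul, hv]⟩ hS

lemma tendsto_zero_of_tendsto_qf {P : Matrix m m ℝ} (hP : P.PosDef) {v : ℕ → m → ℝ}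
    (h : Tendsto (fun k => qf P (v k)) atTop (𝓝 0)) : Tendsto v atTop (𝓝 0) := by
  obtain ⟨μ, hμ, hcoer⟩ := hP.exists_pos_mul_sq_norm_le_qf
  refine squeeze_zero_norm
    (fun k => Real.le_sqrt_of_sq_le ((le_div_iff₀' hμ).2 (hcoer (v k)))) ?_
  simpa using (h.div_const μ).sqrt

lemma isBounded_range_of_qf_le {P : Matrix m m ℝ} (hP : P.PosDef) {v : ℕ → m → ℝ} {C : ℝ}
    (h : ∀ k, qf P (v k) ≤ C) : Bornology.IsBounded (Set.range v) := by
  obtain ⟨μ, hμ, hcoer⟩ := hP.exists_pos_mul_sq_norm_le_qf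
  refine isBounded_iff_forall_norm_le.2 ⟨√(C / μ), ?_⟩
  rintro _ ⟨k, rfl⟩
  exact Real.le_sqrt_of_sq_le ((le_div_iff₀' hμ).2 ((hcoer (v k)).trans (h k)))

lemma mulVec_dotProduct_mulVec_self_le {l : Type*} [Fintype l] (M : Matrix l m ℝ) (v : m → ℝ) :
    (M *ᵥ v) ⬝ᵥ (M *ᵥ v) ≤ (∑ i, ∑ j, M i j ^ 2) * (v ⬝ᵥ v) := by
  calc (M *ᵥ v) ⬝ᵥ (M *ᵥ v) = ∑ i, (∑ j, M i j * v j) ^ 2 := by simp [dotProduct, mulVec, sq]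
    _ ≤ ∑ i, (∑ j, M i j ^ 2) * ∑ j, v j ^ 2 :=
      Finset.sum_le_sum fun i _ => Finset.sum_mul_sq_le_sq_mul_sq _ _ _
    _ = (∑ i, ∑ j, M i j ^ 2) * (v ⬝ᵥ v) := by rw [← Finset.sum_mul]; simp [dotProduct, sq]

end QuadraticForm

lemma tendsto_zero_of_add_mul_le {a b : ℕ → ℝ} {c : ℝ} (hc : 0 < c) (ha : ∀ k, 0 ≤ a k)
    (hb : ∀ k, 0 ≤ b k) (h : ∀ k, a (k + 1) + c * b k ≤ a k) : Tendsto b atTop (𝓝 0) := by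
  have hanti : Antitone a := antitone_nat_of_succ_le fun k => by nlinarith [h k, hb k]
  have hlim := tendsto_atTop_ciInf hanti ⟨0, by rintro _ ⟨k, rfl⟩; exact ha k⟩
  have hdiff : Tendsto (fun k => (a k - a (k + 1)) / c) atTop (𝓝 0) := by
    simpa using (hlim.sub (hlim.comp (tendsto_add_atTop_nat 1))).div_const c
  refine squeeze_zero hb (fun k => ?_) hdiff
  rw [le_div_iff₀ hc]
  linarith [h k]

section PowLimit

variable {M : Type*} [Monoid M] [TopologicalSpace M] [ContinuousMul M] [T2Space M] {a e : M}

lemma mul_eq_right_of_tendsto_pow (h : Tendsto (fun k => a ^ k) atTop (𝓝 e)) : a * e = e :=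
  tendsto_nhds_unique (h.const_mul a) <| by
    simpa only [pow_succ'] using (tendsto_add_atTop_iff_nat 1).2 h

lemma mul_eq_left_of_tendsto_pow (h : Tendsto (fun k => a ^ k) atTop (𝓝 e)) : e * a = e :=
  tendsto_nhds_unique (h.mul_const a) <| by
    simpa only [pow_succ] using (tendsto_add_atTop_iff_nat 1).2 h

lemma isIdempotentElem_of_tendsto_pow (h : Tendsto (fun k => a ^ k) atTop (𝓝 e)) :
    IsIdempotentElem e :=
  tendsto_nhds_unique (h.mul h) <| by
    simpa only [← pow_add, Function.comp_def] using
      h.comp (tendsto_atTop_mono (fun k => Nat.le_add_left k k) tendsto_id)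

end PowLimit

lemma tendsto_sub_pow_of_tendsto_pow {R : Type*} [Ring R] [TopologicalSpace R]
    [IsTopologicalRing R] [T2Space R] {a e : R} (h : Tendsto (fun k => a ^ k) atTop (𝓝 e)) :
    Tendsto (fun k => (a - e) ^ k) atTop (𝓝 0) := by
  have hpow_mul : ∀ k, a ^ k * e = e := by
    intro k
    induction k with
    | zero => simp
    | succ k ih => rw [pow_succ, mul_assoc, mul_eq_right_of_tendsto_pow h, ih]
  have hpow : ∀ k, (a - e) ^ (k + 1) = a ^ (k + 1) - e := by
    intro k
    induction k with
    | zero => simp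
    | succ k ih =>
      rw [pow_succ, ih, sub_mul, mul_sub, mul_sub, ← pow_succ, hpow_mul,
        mul_eq_left_of_tendsto_pow h, (isIdempotentElem_of_tendsto_pow h).eq]
      abel
  refine (tendsto_add_atTop_iff_nat 1).1 ?_
  simpa [hpow] using ((tendsto_add_atTop_iff_nat 1).2 h).sub_const e

section Averaged

variable {m : Type*} [Fintype m] [DecidableEq m]

def IsAveraged (P A : Matrix m m ℝ) (e : ℝ) : Prop :=
  ∀ x y : m → ℝ,
    qf P (A *ᵥ x - A *ᵥ y) ≤ qf P (x - y) - ((1 - e) / e) * qf P ((1 - A) *ᵥ (x - y))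

lemma isAveraged_iff {P A : Matrix m m ℝ} {e : ℝ} :
    IsAveraged P A e ↔ ∀ z, qf P (A *ᵥ z) + ((1 - e) / e) * qf P ((1 - A) *ᵥ z) ≤ qf P z := by
  refine ⟨fun h z => ?_, fun h x y => ?_⟩
  · linarith [by simpa using h z 0]
  · linarith [mulVec_sub A x y ▸ h (x - y)]

lemma isAveraged_of_eq_add_smul {P A T : Matrix m m ℝ} {η : ℝ} (hη : 0 ≤ η)
    (hA : A = (1 - η) • 1 + η • T) (hT : ∀ z, qf P (T *ᵥ z) ≤ qf P z) : IsAveraged P A η := by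
  refine isAveraged_iff.2 fun z => ?_
  have hAz : A *ᵥ z = (1 - η) • z + η • (T *ᵥ z) := by
    simp [hA, add_mulVec, smul_mulVec]
  have h1A : (1 - A) *ᵥ z = η • (z - T *ᵥ z) := by
    rw [sub_mulVec, one_mulVec, hAz]
    module
  have hcoef : (1 - η) / η * η ^ 2 = η * (1 - η) := by
    field_simp
  rw [hAz, h1A, qf_one_sub_smul_add_smul, qf_smul, ← mul_assoc, hcoef]
  nlinarith [hT z]

theorem IsAveraged.exists_tendsto_iterate {P A : Matrix m m ℝ} {e : ℝ} (hP : P.PosDef)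
    (he : e ∈ Set.Ioo 0 1) (hA : IsAveraged P A e) {x : ℕ → m → ℝ}
    (hx : ∀ k, x (k + 1) = A *ᵥ x k) :
    ∃ xbar, (1 - A) *ᵥ xbar = 0 ∧ Tendsto x atTop (𝓝 xbar) := by
  have hc : 0 < (1 - e) / e := div_pos (by linarith [he.2]) he.1
  have hpsd := qf_nonneg hP.posSemidef
  have hfejer : ∀ w, A *ᵥ w = w → ∀ k,
      qf P (x (k + 1) - w) + (1 - e) / e * qf P ((1 - A) *ᵥ (x k - w)) ≤ qf P (x k - w) := by
    intro w hw k
    simpa [hx, mulVec_sub, hw] using isAveraged_iff.1 hA (x k - w)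
  have hanti : ∀ w, A *ᵥ w = w → Antitone fun k => qf P (x k - w) := fun w hw =>
    antitone_nat_of_succ_le fun k => by nlinarith [hfejer w hw k, hpsd ((1 - A) *ᵥ (x k - w))]
  have hA0 : A *ᵥ 0 = 0 := mulVec_zero A
  have hres : Tendsto (fun k => (1 - A) *ᵥ x k) atTop (𝓝 0) :=
    tendsto_zero_of_tendsto_qf hP <| tendsto_zero_of_add_mul_le hc (fun k => hpsd _)
      (fun k => hpsd _) (by simpa using hfejer 0 hA0)
  obtain ⟨w, -, φ, hφ, hxφ⟩ := tendsto_subseq_of_bounded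
    (isBounded_range_of_qf_le hP fun k => by simpa using hanti 0 hA0 (Nat.zero_le k))
    (fun k => Set.mem_range_self k)
  have hw : (1 - A) *ᵥ w = 0 := tendsto_nhds_unique
    (((continuous_const.matrix_mulVec continuous_id).tendsto w).comp hxφ)
    (hres.comp hφ.tendsto_atTop)
  have hAw : A *ᵥ w = w := by rwa [sub_mulVec, one_mulVec, sub_eq_zero, eq_comm] at hw
  refine ⟨w, hw, tendsto_sub_nhds_zero_iff.1 (tendsto_zero_of_tendsto_qf hP ?_)⟩
  refine (tendsto_iff_tendsto_subseq_of_antitone (hanti w hAw) hφ.tendsto_atTop).2 ?_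
  exact qf_zero P ▸ ((continuous_qf P).tendsto 0).comp (tendsto_sub_nhds_zero_iff.2 hxφ)

lemma exists_tendsto_pow_of_tendsto_mulVec {A : Matrix m m ℝ}
    (h : ∀ x₀, ∃ xbar, Tendsto (fun k => (A ^ k) *ᵥ x₀) atTop (𝓝 xbar)) :
    ∃ E, Tendsto (fun k => A ^ k) atTop (𝓝 E) := by
  choose L hL using h
  refine ⟨Matrix.of fun i j => L (Pi.single j 1) i,
    tendsto_pi_nhds.2 fun i => tendsto_pi_nhds.2 fun j => ?_⟩
  simpa [mulVec_single_one, Function.comp_def] using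
    ((continuous_apply i).tendsto _).comp (hL (Pi.single j 1))

lemma qf_sum_pow_mulVec_add (N : Matrix m m ℝ) (p : ℕ) (v : m → ℝ) :
    qf (∑ k ∈ range p, (N ^ k)ᴴ * N ^ k) (N *ᵥ v) + v ⬝ᵥ v =
      qf (∑ k ∈ range p, (N ^ k)ᴴ * N ^ k) v + (N ^ p *ᵥ v) ⬝ᵥ (N ^ p *ᵥ v) := by
  have h := (Finset.sum_range_succ' (fun k => (N ^ k *ᵥ v) ⬝ᵥ (N ^ k *ᵥ v)) p).symm.trans
    (Finset.sum_range_succ _ _)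
  simp only [qf_sum, qf_conjTranspose_mul_self, mulVec_mulVec, ← pow_succ] at h ⊢
  simpa using h

theorem exists_lyapunov_of_tendsto_pow_zero {N : Matrix m m ℝ}
    (hN : Tendsto (fun k => N ^ k) atTop (𝓝 0)) :
    ∃ Q : Matrix m m ℝ, Q.PosSemidef ∧ (∀ v, v ⬝ᵥ v ≤ qf Q v) ∧
      ∃ ρ < 1, ∀ v, qf Q (N *ᵥ v) ≤ ρ * qf Q v := by
  let F : Matrix m m ℝ → ℝ := fun M => ∑ i, ∑ j, M i j ^ 2
  have hF : Tendsto (fun k => F (N ^ k)) atTop (𝓝 0) := by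
    have hFc : Continuous F := by fun_prop
    simpa [F, Function.comp_def] using (hFc.tendsto 0).comp hN
  obtain ⟨p, hp⟩ :=
    (hF.eventually (gt_mem_nhds (by norm_num : (0 : ℝ) < 1 / 2))).exists_forall_of_atTop
  let Q := ∑ k ∈ range (p + 1), (N ^ k)ᴴ * N ^ k
  have hqQ : ∀ v, qf Q v = ∑ k ∈ range (p + 1), (N ^ k *ᵥ v) ⬝ᵥ (N ^ k *ᵥ v) := fun v => by
    simp only [Q, qf_sum, qf_conjTranspose_mul_self]
  let K := 1 + ∑ k ∈ range (p + 1), F (N ^ k)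
  have hK : 0 < K := by positivity
  have hQK : ∀ v, qf Q v ≤ K * (v ⬝ᵥ v) := fun v => by
    have h := Finset.sum_le_sum fun k (_ : k ∈ range (p + 1)) =>
      mulVec_dotProduct_mulVec_self_le (N ^ k) v
    rw [← Finset.sum_mul, ← hqQ] at h
    exact h.trans (mul_le_mul_of_nonneg_right (le_add_of_nonneg_left zero_le_one)
      (dotProduct_self_nonneg v))
  -- One step of `N` loses `v ⬝ᵥ v - |N ^ (p + 1) v|² ≥ (v ⬝ᵥ v) / 2 ≥ qf Q v / (2 * K)`.
  refine ⟨Q, posSemidef_sum _ fun k _ => posSemidef_conjTranspose_mul_self _, fun v => ?_,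
    1 - 1 / (2 * K), by linarith [show 0 < 1 / (2 * K) by positivity], fun v => ?_⟩
  · simpa [hqQ] using Finset.single_le_sum (fun k _ => dotProduct_self_nonneg (N ^ k *ᵥ v))
      (Finset.mem_range.2 p.succ_pos)
  · have hsmall := (mulVec_dotProduct_mulVec_self_le (N ^ (p + 1)) v).trans
      (mul_le_mul_of_nonneg_right (hp (p + 1) p.le_succ).le (dotProduct_self_nonneg v))
    rw [sub_mul, one_mul, div_mul_eq_mul_div, one_mul, le_sub_iff_add_le, ← le_sub_iff_add_le',
      div_le_iff₀ (by positivity)]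
    nlinarith [qf_sum_pow_mulVec_add N (p + 1) v, hQK v]

lemma Matrix.PosSemidef.posDef_conjTranspose_mul_self_add {Q : Matrix m m ℝ} (hQ : Q.PosSemidef)
    (hQ1 : ∀ v, v ⬝ᵥ v ≤ qf Q v) (E : Matrix m m ℝ) :
    (Eᴴ * E + (1 - E)ᴴ * Q * (1 - E)).PosDef := by
  refine PosDef.of_dotProduct_mulVec_pos ((posSemidef_conjTranspose_mul_self E).add
    (hQ.conjTranspose_mul_mul_same (1 - E))).isHermitian fun v hv => ?_
  change 0 < qf _ v
  rw [qf_add, qf_conjTranspose_mul_self, qf_conjTranspose_mul_mul]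
  by_contra! hle
  have hE : E *ᵥ v = 0 := dotProduct_self_eq_zero.1 <| le_antisymm
    (by linarith [qf_nonneg hQ ((1 - E) *ᵥ v)]) (dotProduct_self_nonneg _)
  have h1E : (1 - E) *ᵥ v = 0 := dotProduct_self_eq_zero.1 <| le_antisymm
    (by linarith [hQ1 ((1 - E) *ᵥ v), dotProduct_self_nonneg (E *ᵥ v)])
    (dotProduct_self_nonneg _)
  rw [sub_mulVec, one_mulVec, hE, sub_zero] at h1E
  exact hv h1E

theorem exists_isAveraged_of_tendsto_pow {A E : Matrix m m ℝ}
    (hE : Tendsto (fun k => A ^ k) atTop (𝓝 E)) :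
    ∃ e ∈ Set.Ioo (0 : ℝ) 1, ∃ P : Matrix m m ℝ, P.PosDef ∧ IsAveraged P A e := by
  obtain ⟨Q, hQ, hQ1, ρ, hρ, hNQ⟩ :=
    exists_lyapunov_of_tendsto_pow_zero (tendsto_sub_pow_of_tendsto_pow hE)
  have hr : √ρ < 1 := (Real.sqrt_lt' one_pos).2 (by simpa using hρ)
  set η := (1 + √ρ) / 2 with hη_def
  have hη : η ∈ Set.Ioo 0 1 := ⟨by positivity, by linarith⟩
  have hη0 : η ≠ 0 := hη.1.ne'
  set T := η⁻¹ • (A - (1 - η) • 1)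
  have hA : A = (1 - η) • 1 + η • T := by
    simp only [T, smul_smul, mul_inv_cancel₀ hη0, one_smul]
    abel
  have hET : E * T = E := by
    simp only [T, Matrix.mul_smul, Matrix.mul_sub, mul_eq_left_of_tendsto_pow hE, Matrix.mul_one]
    match_scalars
    field_simp
    ring
  have h1ET : (1 - E) * T = η⁻¹ • ((A - E) * (1 - E) - (1 - η) • (1 - E)) := by
    simp only [T, Matrix.mul_smul, Matrix.mul_sub, Matrix.sub_mul, mul_eq_left_of_tendsto_pow hE,
      mul_eq_right_of_tendsto_pow hE, (isIdempotentElem_of_tendsto_pow hE).eq, Matrix.mul_one,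
      Matrix.one_mul, sub_self, sub_zero]
  refine ⟨η, hη, _, hQ.posDef_conjTranspose_mul_self_add hQ1 E,
    isAveraged_of_eq_add_smul hη.1.le hA fun z => ?_⟩
  have hz := qf_mulVec_sub_smul_le hQ (sub_nonneg.2 hη.2.le) hNQ ((1 - E) *ᵥ z)
  simp only [qf_add, qf_conjTranspose_mul_self, qf_conjTranspose_mul_mul, mulVec_mulVec, hET, h1ET]
  rw [smul_mulVec, qf_smul, sub_mulVec, smul_mulVec, ← mulVec_mulVec]
  have hscale := mul_le_mul_of_nonneg_left hz (sq_nonneg η⁻¹)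
  rw [show √ρ + (1 - η) = η by linarith, ← mul_assoc, ← mul_pow, inv_mul_cancel₀ hη0, one_pow,
    one_mul] at hscale
  linarith

end Averaged

theorem stmt9 (n : ℕ) (A : Matrix (Fin n) (Fin n) ℝ) :
    (∃ e ∈ Set.Ioo (0 : ℝ) 1, ∃ P : Matrix (Fin n) (Fin n) ℝ, P.PosDef ∧
        ∀ x y : Fin n → ℝ,
          qf P (A.mulVec x - A.mulVec y) ≤
            qf P (x - y) - ((1 - e) / e) * qf P ((1 - A).mulVec (x - y))) ↔
      (∀ x : ℕ → Fin n → ℝ, (∀ j, x (j + 1) = A.mulVec (x j)) →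
        ∃ xbar : Fin n → ℝ, (1 - A).mulVec xbar = 0 ∧
          Tendsto x atTop (nhds xbar)) := by
  constructor
  · rintro ⟨e, he, P, hP, hA⟩ x hx
    exact IsAveraged.exists_tendsto_iterate hP he hA hx
  · intro H
    have horbit : ∀ x₀ k, A ^ (k + 1) *ᵥ x₀ = A *ᵥ (A ^ k *ᵥ x₀) := fun x₀ k => by
      rw [mulVec_mulVec, pow_succ']
    obtain ⟨E, hE⟩ := exists_tendsto_pow_of_tendsto_mulVec fun x₀ =>
      (H _ (horbit x₀)).imp fun _ => And.right
    exact exists_isAveraged_of_tendsto_pow hE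
end

section
/- Let L ∈ ℝ^{N×N} be the Laplacian of a connected directed graph (row sums zero, 0 a simple eigenvalue, all nonzero eigenvalues with strictly positive real part), and (α_k) a positive sequence with α_k bounded, α_k → 0, Σ α_k = ∞. Then every solution of x(k+1) = x(k) − α_k L x(k) converges to c·1_N for some c ∈ ℝ. -/
open Matrix Filter Finset Polynomial

/-!
Let `w` be a left null vector of `L` with `w ⬝ᵥ 1 = 1`; it exists because `0` is a simple
eigenvalue, so that `1 ∉ range L`. The weighted average `w ⬝ᵥ x k` is conserved, and
`y k = x k - (w ⬝ᵥ x 0) • 1` obeys the same recursion with `L` replaced by `B = L + 1 wᵀ`, whose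
spectrum is that of `L` with the eigenvalue `0` replaced by `1`, hence lies in the open right
half-plane. For small `t > 0` the spectral radius of `1 - t B` is then `< 1`, and Gelfand's formula
gives a norm in which `1 - t B` contracts by some `r < 1`. For `α_k ≤ t` the matrix `1 - α_k B` is
a convex combination of `1` and `1 - t B`, so it contracts by `1 - (1 - r) α_k / t`; since
`∑ α_k = ∞`, the product of these factors tends to `0`, and so does `y k`.
-/

open scoped NNReal ENNReal

theorem Module.Dual.apply_eq_dotProduct {R n : Type*} [CommSemiring R] [Fintype n]
    [DecidableEq n] (f : Module.Dual R (n → R)) (v : n → R) :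
    f v = (fun i => f (Pi.single i 1)) ⬝ᵥ v := by
  conv_lhs => rw [← Finset.univ_sum_single v]
  rw [map_sum]
  refine Finset.sum_congr rfl fun i _ => ?_
  rw [mul_comm, ← smul_eq_mul, ← map_smul]
  congr 1
  ext j
  simp [Pi.single_apply]

namespace Matrix

section Field

variable {K n : Type*} [Field K] [Fintype n] [DecidableEq n] {M : Matrix n n K}

theorem nonempty_of_rootMultiplicity_charpoly_eq_one
    (hsimple : M.charpoly.rootMultiplicity 0 = 1) : Nonempty n := by
  by_contra h
  rw [not_nonempty_iff] at h
  rw [charpoly_isEmpty, ← C_1, rootMultiplicity_C] at hsimple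
  exact zero_ne_one hsimple

theorem maxGenEigenspace_toLin'_zero_eq_span_one (h1 : M *ᵥ 1 = 0)
    (hsimple : M.charpoly.rootMultiplicity 0 = 1) :
    Module.End.maxGenEigenspace (toLin' M) 0 = K ∙ 1 := by
  have := nonempty_of_rootMultiplicity_charpoly_eq_one hsimple
  refine (Submodule.eq_of_le_of_finrank_le ?_ ?_).symm
  · rw [Submodule.span_singleton_le_iff_mem, Module.End.mem_maxGenEigenspace]
    exact ⟨1, by simpa using h1⟩
  · rw [LinearMap.finrank_maxGenEigenspace_zero_eq, charpoly_toLin',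
      ← rootMultiplicity_eq_natTrailingDegree', hsimple, finrank_span_singleton one_ne_zero]

theorem exists_eq_smul_one_of_mulVec_mulVec_eq_zero (h1 : M *ᵥ 1 = 0)
    (hsimple : M.charpoly.rootMultiplicity 0 = 1) {v : n → K} (hv : M *ᵥ (M *ᵥ v) = 0) :
    ∃ c : K, v = c • 1 := by
  have hmem : v ∈ Module.End.maxGenEigenspace (toLin' M) 0 :=
    (Module.End.mem_maxGenEigenspace _ _ _).mpr ⟨2, by simpa [pow_two] using hv⟩
  rw [maxGenEigenspace_toLin'_zero_eq_span_one h1 hsimple, Submodule.mem_span_singleton] at hmem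
  obtain ⟨c, rfl⟩ := hmem
  exact ⟨c, rfl⟩

theorem exists_vecMul_eq_zero_dotProduct_one (h1 : M *ᵥ 1 = 0)
    (hsimple : M.charpoly.rootMultiplicity 0 = 1) :
    ∃ w : n → K, w ᵥ* M = 0 ∧ w ⬝ᵥ 1 = 1 := by
  have := nonempty_of_rootMultiplicity_charpoly_eq_one hsimple
  have hnotMem : (1 : n → K) ∉ LinearMap.range (toLin' M) := by
    rintro ⟨u, hu⟩
    rw [toLin'_apply] at hu
    obtain ⟨c, rfl⟩ := exists_eq_smul_one_of_mulVec_mulVec_eq_zero h1 hsimple (by rw [hu, h1])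
    rw [mulVec_smul, h1, smul_zero] at hu
    exact zero_ne_one hu
  obtain ⟨f, hf1, hfM⟩ := Submodule.exists_dual_map_eq_bot_of_notMem hnotMem inferInstance
  set w₀ : n → K := fun i => f (Pi.single i 1)
  have hw₀M : ∀ v, w₀ ⬝ᵥ (M *ᵥ v) = 0 := fun v => by
    rw [← f.apply_eq_dotProduct]
    simpa [hfM] using Submodule.mem_map_of_mem (f := f) (LinearMap.mem_range_self (toLin' M) v)
  refine ⟨(f 1)⁻¹ • w₀, ?_, ?_⟩
  · ext j
    have := hw₀M (Pi.single j 1)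
    rw [dotProduct_mulVec, dotProduct_single, mul_one] at this
    simp [smul_vecMul, this]
  · rw [smul_dotProduct, ← f.apply_eq_dotProduct, smul_eq_mul, inv_mul_cancel₀ hf1]

theorem mem_spectrum_iff_exists_mulVec_eq_smul {A : Matrix n n K} {μ : K} :
    μ ∈ spectrum K A ↔ ∃ v ≠ 0, A *ᵥ v = μ • v := by
  rw [← spectrum_toLin', ← Module.End.hasEigenvalue_iff_mem_spectrum]
  constructor
  · intro h
    obtain ⟨v, hv⟩ := h.exists_hasEigenvector
    exact ⟨v, hv.2, by simpa using hv.apply_eq_smul⟩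
  · rintro ⟨v, hv0, hv⟩
    exact Module.End.hasEigenvalue_of_hasEigenvector
      ⟨by simpa [Module.End.mem_eigenspace_iff] using hv, hv0⟩

theorem eq_one_or_mem_spectrum_of_mem_spectrum_add_vecMulVec (h1 : M *ᵥ 1 = 0)
    (hsimple : M.charpoly.rootMultiplicity 0 = 1) {w : n → K} (hw : w ᵥ* M = 0)
    (hw1 : w ⬝ᵥ 1 = 1) {μ : K} (hμ : μ ∈ spectrum K (M + vecMulVec 1 w)) :
    μ = 1 ∨ (μ ≠ 0 ∧ μ ∈ spectrum K M) := by
  obtain ⟨v, hv0, hv⟩ := mem_spectrum_iff_exists_mulVec_eq_smul.mp hμ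
  rw [add_mulVec, vecMulVec_mulVec] at hv
  have hwv : μ * (w ⬝ᵥ v) = w ⬝ᵥ v := by
    have := congrArg (w ⬝ᵥ ·) hv
    simp only [dotProduct_add, dotProduct_mulVec, hw, zero_dotProduct] at this
    simpa [hw1, dotProduct_smul] using this.symm
  by_cases hμ1 : μ = 1
  · exact Or.inl hμ1
  have hwv0 : w ⬝ᵥ v = 0 := by
    by_contra h
    exact hμ1 (mul_right_cancel₀ h (hwv.trans (one_mul _).symm))
  have hMv : M *ᵥ v = μ • v := by simpa [hwv0] using hv
  refine Or.inr ⟨?_, mem_spectrum_iff_exists_mulVec_eq_smul.mpr ⟨v, hv0, hMv⟩⟩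
  rintro rfl
  obtain ⟨c, rfl⟩ := exists_eq_smul_one_of_mulVec_mulVec_eq_zero h1 hsimple
    (by rw [hMv, zero_smul, mulVec_zero])
  rw [dotProduct_smul, hw1, smul_eq_mul, mul_one] at hwv0
  exact hv0 (by rw [hwv0, zero_smul])

end Field

theorem iterate_sub_smul_one {R n : Type*} [CommRing R] [Fintype n] {L : Matrix n n R}
    (hL1 : L *ᵥ 1 = 0) {w : n → R} (hw : w ᵥ* L = 0) (hw1 : w ⬝ᵥ 1 = 1) {a : ℕ → R}
    {x : ℕ → n → R} (hx : ∀ k, x (k + 1) = x k - a k • L *ᵥ x k) (k : ℕ) :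
    x (k + 1) - (w ⬝ᵥ x 0) • 1
      = (x k - (w ⬝ᵥ x 0) • 1) - a k • (L + vecMulVec 1 w) *ᵥ (x k - (w ⬝ᵥ x 0) • 1) := by
  have hconst : ∀ k, w ⬝ᵥ x k = w ⬝ᵥ x 0 := fun k => by
    induction k with
    | zero => rfl
    | succ k ih => rw [hx, dotProduct_sub, dotProduct_smul, dotProduct_mulVec, hw,
        zero_dotProduct, smul_zero, sub_zero, ih]
  rw [add_mulVec, vecMulVec_mulVec, op_smul_eq_smul, mulVec_sub, mulVec_smul, hL1, dotProduct_sub,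
    dotProduct_smul, hw1, hconst k, smul_eq_mul, mul_one, sub_self, zero_smul, smul_zero, sub_zero,
    add_zero, hx]
  abel

end Matrix

section BanachAlgebra

variable {A : Type*} [NormedRing A] [NormedAlgebra ℂ A] [CompleteSpace A]

theorem spectrum.exists_spectralRadius_one_sub_smul_lt_one {a : A}
    (ha : ∀ μ ∈ spectrum ℂ a, 0 < μ.re) :
    ∃ t : ℝ, 0 < t ∧ spectralRadius ℂ (1 - (t : ℂ) • a) < 1 := by
  have hcont : ContinuousOn (fun μ : ℂ => μ.re / Complex.normSq μ) (spectrum ℂ a) := by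
    refine Complex.continuous_re.continuousOn.div Complex.continuous_normSq.continuousOn ?_
    intro μ hμ h0
    have := ha μ hμ
    rw [Complex.normSq_eq_zero.mp h0, Complex.zero_re] at this
    exact this.false
  obtain ⟨t, ht, htμ⟩ := (spectrum.isCompact a).exists_forall_le' hcont
    fun μ hμ => div_pos (ha μ hμ) (Complex.normSq_pos.mpr fun h => by simpa [h] using ha μ hμ)
  refine ⟨t, ht, ?_⟩
  rcases subsingleton_or_nontrivial A with hA | hA
  · rw [SpectralRadius.of_subsingleton]
    exact zero_lt_one
  have hsp : spectrum ℂ (1 - (t : ℂ) • a) = (fun μ : ℂ => 1 - t * μ) '' spectrum ℂ a := by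
    have := spectrum.map_polynomial_aeval a (1 - Polynomial.C (t : ℂ) * Polynomial.X)
    simp only [map_sub, map_one, map_mul, Polynomial.aeval_C, Polynomial.aeval_X, eval_sub,
      eval_one, eval_mul, eval_C, eval_X] at this
    rwa [Algebra.algebraMap_eq_smul_one, smul_one_mul] at this
  rw [← ENNReal.coe_one]
  refine spectrum.spectralRadius_lt_of_forall_lt _ ?_
  rw [hsp]
  rintro _ ⟨μ, hμ, rfl⟩
  have hre := ha μ hμ
  have hle : t * Complex.normSq μ ≤ μ.re := by
    have := htμ μ hμ
    rwa [le_div_iff₀ (Complex.normSq_pos.mpr fun h => by simp [h] at hre)] at this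
  have hnormSq : Complex.normSq (1 - t * μ) = 1 - 2 * t * μ.re + t * (t * Complex.normSq μ) := by
    simp [Complex.normSq_apply]
    ring
  rw [← NNReal.coe_lt_coe, coe_nnnorm, NNReal.coe_one, ← sq_lt_one_iff₀ (norm_nonneg _),
    Complex.sq_norm, hnormSq]
  nlinarith [mul_pos ht hre]

theorem spectrum.eventually_nnnorm_pow_le {a : A} {r : ℝ≥0} (hr : spectralRadius ℂ a < r) :
    ∀ᶠ k in atTop, ‖a ^ k‖₊ ≤ r ^ k := by
  filter_upwards [(spectrum.pow_nnnorm_pow_one_div_tendsto_nhds_spectralRadius a).eventually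
    (gt_mem_nhds hr), eventually_ne_atTop 0] with k hk hk0
  rw [one_div] at hk
  rw [← ENNReal.coe_le_coe, ENNReal.coe_pow,
    ← ENNReal.rpow_inv_natCast_pow (x := (‖a ^ k‖₊ : ℝ≥0∞)) hk0]
  exact pow_le_pow_left₀ (by positivity) hk.le k

end BanachAlgebra

theorem Seminorm.exists_apply_le_mul_of_norm_pow_apply_le {𝕜 E : Type*} [NormedField 𝕜]
    [SeminormedAddCommGroup E] [NormedSpace 𝕜 E] (T : E →ₗ[𝕜] E) {r : ℝ≥0} (hr : 0 < r)
    {k : ℕ} (hk : 0 < k) (hT : ∀ v, ‖(T ^ k) v‖ ≤ r ^ k * ‖v‖) :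
    ∃ p : Seminorm 𝕜 E, (∀ v, ‖v‖ ≤ p v) ∧ ∀ v, p (T v) ≤ r * p v := by
  set f : E → ℕ → ℝ := fun v j => (r : ℝ)⁻¹ ^ j * ‖(T ^ j) v‖
  have hf0 : ∀ v j, 0 ≤ f v j := fun v j => by positivity
  let p : Seminorm 𝕜 E := ∑ j ∈ Finset.range k, (r⁻¹ ^ j) • (normSeminorm 𝕜 E).comp (T ^ j)
  have hp : ∀ v, p v = ∑ j ∈ Finset.range k, f v j := fun v => by
    simp [p, f, NNReal.smul_def]
  refine ⟨p, fun v => ?_, fun v => ?_⟩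
  · rw [hp]
    simpa [f] using Finset.single_le_sum (fun j _ => hf0 v j) (Finset.mem_range.mpr hk)
  · have hshift : ∀ j, f (T v) j = r * f v (j + 1) := fun j => by
      simp only [f, pow_succ, Module.End.mul_apply, inv_pow]
      field_simp
    have hlast : f v k ≤ f v 0 := by
      simp only [f, pow_zero, inv_one, one_mul, Module.End.one_apply, inv_pow]
      rw [inv_mul_le_iff₀ (by positivity)]
      exact hT v
    have hsplit := Finset.sum_range_succ' (f v) k
    rw [Finset.sum_range_succ] at hsplit
    rw [hp, hp, Finset.sum_congr rfl fun j _ => hshift j, ← Finset.mul_sum]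
    exact mul_le_mul_of_nonneg_left (by linarith) r.2

theorem Seminorm.apply_sub_smul_le_of_apply_sub_smul_le {E : Type*} [AddCommGroup E]
    [Module ℝ E] (p : Seminorm ℝ E) {v w : E} {r s t : ℝ} (hs : 0 ≤ s) (hst : s ≤ t)
    (h : p (v - t • w) ≤ r * p v) : p (v - s • w) ≤ (1 - (1 - r) * (s / t)) * p v := by
  rcases (hs.trans hst).eq_or_lt with rfl | ht
  · obtain rfl : s = 0 := le_antisymm hst hs
    simp
  have hst' : s / t ≤ 1 := div_le_one_of_le₀ hst ht.le
  have hs' : 0 ≤ s / t := div_nonneg hs ht.le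
  have hconvex : v - s • w = (1 - s / t) • v + (s / t) • (v - t • w) := by
    rw [smul_sub, smul_smul, div_mul_cancel₀ s ht.ne', sub_smul, one_smul]
    abel
  calc p (v - s • w) ≤ (1 - s / t) * p v + s / t * p (v - t • w) := by
        rw [hconvex]
        refine (map_add_le_add p _ _).trans_eq ?_
        rw [map_smul_eq_mul, map_smul_eq_mul, Real.norm_of_nonneg (by linarith),
          Real.norm_of_nonneg hs']
    _ ≤ (1 - s / t) * p v + s / t * (r * p v) := by gcongr
    _ = (1 - (1 - r) * (s / t)) * p v := by ring

namespace Matrix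

variable {n : Type*} [Fintype n] [DecidableEq n]

open scoped Norms.Operator in
theorem exists_seminorm_mulVec_le_of_spectralRadius_lt_one {A : Matrix n n ℂ}
    (hA : spectralRadius ℂ A < 1) :
    ∃ r : ℝ, r < 1 ∧ ∃ p : Seminorm ℂ (n → ℂ), (∀ v, ‖v‖ ≤ p v) ∧ ∀ v, p (A *ᵥ v) ≤ r * p v := by
  obtain ⟨r, hAr, hr1⟩ := ENNReal.lt_iff_exists_nnreal_btwn.mp hA
  obtain ⟨k, hk, hk0⟩ :=
    ((spectrum.eventually_nnnorm_pow_le hAr).and (eventually_gt_atTop 0)).exists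
  have hr : 0 < r := ENNReal.coe_pos.mp (hAr.trans_le' bot_le)
  obtain ⟨p, hp, hpA⟩ := Seminorm.exists_apply_le_mul_of_norm_pow_apply_le (toLin' A) hr hk0
    fun v => by
      rw [← toLin'_pow, toLin'_apply]
      refine (linfty_opNorm_mulVec _ v).trans (mul_le_mul_of_nonneg_right ?_ (norm_nonneg v))
      exact_mod_cast hk
  exact ⟨r, by exact_mod_cast hr1, p, hp, fun v => by simpa using hpA v⟩

open scoped Norms.Operator in
theorem exists_seminorm_sub_smul_mulVec_le {B : Matrix n n ℝ}
    (hB : ∀ μ ∈ spectrum ℂ (cmat B), 0 < μ.re) :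
    ∃ t : ℝ, 0 < t ∧ ∃ r : ℝ, r < 1 ∧ ∃ q : Seminorm ℝ (n → ℝ),
      (∀ v, ‖v‖ ≤ q v) ∧ ∀ v, q (v - t • B *ᵥ v) ≤ r * q v := by
  obtain ⟨t, ht, hρ⟩ := spectrum.exists_spectralRadius_one_sub_smul_lt_one hB
  obtain ⟨r, hr, p, hp, hpA⟩ := exists_seminorm_mulVec_le_of_spectralRadius_lt_one hρ
  let ofReal : (n → ℝ) →ₗ[ℝ] (n → ℂ) := (Algebra.linearMap ℝ ℂ).compLeft n
  have hofReal : ∀ v, ofReal (v - t • B *ᵥ v) = (1 - (t : ℂ) • cmat B) *ᵥ ofReal v := fun v => by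
    ext i
    simp only [sub_mulVec, smul_mulVec, one_mulVec, map_sub, map_smul, Pi.sub_apply,
      Pi.smul_apply]
    congr 2
    exact RingHom.map_mulVec Complex.ofRealHom B v i
  refine ⟨t, ht, r, hr, (p.restrictScalars ℝ).comp ofReal, fun v => ?_, fun v => ?_⟩
  · refine le_of_eq_of_le ?_ (hp (ofReal v))
    simp [ofReal, Pi.norm_def]
  · simpa [hofReal] using hpA (ofReal v)

end Matrix

theorem tendsto_zero_of_le_one_sub_mul {u a : ℕ → ℝ} {β : ℝ} (hu : ∀ k, 0 ≤ u k) (hβ : 0 < β)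
    (hstep : ∀ᶠ k in atTop, u (k + 1) ≤ (1 - β * a k) * u k)
    (hdiv : Tendsto (fun M => ∑ j ∈ range M, a j) atTop atTop) :
    Tendsto u atTop (nhds 0) := by
  obtain ⟨J, hJ⟩ := eventually_atTop.mp hstep
  set S : ℕ → ℝ := fun M => ∑ j ∈ range M, a j
  have hbound : ∀ k, J ≤ k → u k ≤ u J * Real.exp (-(β * (S k - S J))) := by
    intro k hk
    induction k, hk using Nat.le_induction with
    | base => simp
    | succ k hk ih =>
      calc u (k + 1) ≤ (1 - β * a k) * u k := hJ k hk
        _ ≤ Real.exp (-(β * a k)) * u k := by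
          gcongr
          · exact hu k
          · linarith [Real.add_one_le_exp (-(β * a k))]
        _ ≤ Real.exp (-(β * a k)) * (u J * Real.exp (-(β * (S k - S J)))) := by gcongr
        _ = u J * Real.exp (-(β * (S (k + 1) - S J))) := by
          rw [show S (k + 1) = S k + a k from sum_range_succ a k, mul_left_comm, ← Real.exp_add]
          ring_nf
  have hexp : Tendsto (fun k => u J * Real.exp (-(β * (S k - S J)))) atTop (nhds 0) := by
    rw [← mul_zero (u J)]
    refine tendsto_const_nhds.mul (Real.tendsto_exp_atBot.comp ?_)
    exact tendsto_neg_atTop_atBot.comp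
      ((tendsto_atTop_add_const_right _ _ hdiv).const_mul_atTop hβ)
  exact squeeze_zero' (Eventually.of_forall hu) (eventually_atTop.mpr ⟨J, hbound⟩) hexp

theorem tendsto_zero_of_seminorm_sub_smul_le {E : Type*} [SeminormedAddCommGroup E]
    [Module ℝ E] {T : E → E} {p : Seminorm ℝ E} (hp : ∀ v, ‖v‖ ≤ p v) {t r : ℝ} (ht : 0 < t)
    (hr : r < 1) (hT : ∀ v, p (v - t • T v) ≤ r * p v) {a : ℕ → ℝ} (ha : ∀ k, 0 ≤ a k)
    (hlim : Tendsto a atTop (nhds 0)) (hdiv : Tendsto (fun M => ∑ j ∈ range M, a j) atTop atTop)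
    {y : ℕ → E} (hy : ∀ k, y (k + 1) = y k - a k • T (y k)) :
    Tendsto y atTop (nhds 0) := by
  have hstep : ∀ᶠ k in atTop, p (y (k + 1)) ≤ (1 - (1 - r) / t * a k) * p (y k) := by
    filter_upwards [hlim.eventually (ge_mem_nhds ht)] with k hk
    rw [hy, div_mul_eq_mul_div, mul_div_assoc]
    exact p.apply_sub_smul_le_of_apply_sub_smul_le (ha k) hk (hT (y k))
  have hpy := tendsto_zero_of_le_one_sub_mul (fun k => apply_nonneg p (y k))
    (div_pos (sub_pos.mpr hr) ht) hstep hdiv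
  exact tendsto_zero_iff_norm_tendsto_zero.mpr
    (squeeze_zero (fun k => norm_nonneg _) (fun k => hp (y k)) hpy)

section cmat

variable {n : Type*} [Fintype n] [DecidableEq n]

theorem algMult_zero_eq_rootMultiplicity_charpoly (L : Matrix n n ℝ) :
    algMult L 0 = L.charpoly.rootMultiplicity 0 := by
  rw [algMult, eq_rootMultiplicity_map (f := Complex.ofRealHom) Complex.ofReal_injective,
    map_zero, ← charpoly_map]
  rfl

theorem cmat_mulVec_ofReal (A : Matrix n n ℝ) (v : n → ℝ) :
    cmat A *ᵥ (fun i => (v i : ℂ)) = fun i => ((A *ᵥ v) i : ℂ) :=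
  funext fun i => (RingHom.map_mulVec Complex.ofRealHom A v i).symm

theorem ofReal_vecMul_cmat (A : Matrix n n ℝ) (v : n → ℝ) :
    (fun i => (v i : ℂ)) ᵥ* cmat A = fun i => ((v ᵥ* A) i : ℂ) :=
  funext fun i => (RingHom.map_vecMul Complex.ofRealHom A v i).symm

theorem re_pos_of_mem_spectrum_cmat_add_vecMulVec {L : Matrix n n ℝ} (hL1 : L *ᵥ 1 = 0)
    (hsimple : algMult L 0 = 1) (hre : ∀ lam : ℂ, IsEig L lam → lam ≠ 0 → 0 < lam.re)
    {w : n → ℝ} (hw : w ᵥ* L = 0) (hw1 : w ⬝ᵥ 1 = 1) {μ : ℂ}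
    (hμ : μ ∈ spectrum ℂ (cmat (L + vecMulVec 1 w))) : 0 < μ.re := by
  have hcmat : cmat (L + vecMulVec 1 w) = cmat L + vecMulVec 1 (fun i => (w i : ℂ)) := by
    ext i j
    simp [cmat]
  have hL1' : cmat L *ᵥ 1 = 0 := (cmat_mulVec_ofReal L 1).trans (by ext; simp [hL1])
  have hw' : (fun i => (w i : ℂ)) ᵥ* cmat L = 0 :=
    (ofReal_vecMul_cmat L w).trans (by ext; simp [hw])
  have hw1' : (fun i => (w i : ℂ)) ⬝ᵥ 1 = 1 :=
    (RingHom.map_dotProduct Complex.ofRealHom w 1).symm.trans (by simp [hw1])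
  rw [hcmat] at hμ
  rcases Matrix.eq_one_or_mem_spectrum_of_mem_spectrum_add_vecMulVec hL1' hsimple hw' hw1' hμ
    with rfl | ⟨hμ0, hμL⟩
  · exact one_pos
  · exact hre μ (Matrix.mem_spectrum_iff_isRoot_charpoly.mp hμL) hμ0

end cmat

theorem stmt16_general (N : ℕ) (L : Matrix (Fin N) (Fin N) ℝ)
    (hrow : L.mulVec (fun _ => 1) = 0)
    (hsimple : algMult L 0 = 1)
    (hre : ∀ lam : ℂ, IsEig L lam → lam ≠ 0 → 0 < lam.re)
    (a : ℕ → ℝ)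
    (hpos : ∀ j, 0 < a j)
    (hlim : Tendsto a atTop (nhds 0))
    (hdiv : Tendsto (fun M => ∑ j ∈ Finset.range M, a j) atTop atTop)
    (x : ℕ → Fin N → ℝ)
    (hrec : ∀ j, x (j + 1) = x j - a j • L.mulVec (x j)) :
    ∃ c : ℝ, Tendsto x atTop (nhds (fun _ => c)) := by
  obtain ⟨w, hw, hw1⟩ := Matrix.exists_vecMul_eq_zero_dotProduct_one hrow
    ((algMult_zero_eq_rootMultiplicity_charpoly L).symm.trans hsimple)
  obtain ⟨t, ht, r, hr, q, hq, hqB⟩ := Matrix.exists_seminorm_sub_smul_mulVec_le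
    fun μ => re_pos_of_mem_spectrum_cmat_add_vecMulVec hrow hsimple hre hw hw1
  refine ⟨w ⬝ᵥ x 0, ?_⟩
  have hy := tendsto_zero_of_seminorm_sub_smul_le (y := fun k => x k - (w ⬝ᵥ x 0) • 1)
    hq ht hr hqB (fun k => (hpos k).le) hlim hdiv (Matrix.iterate_sub_smul_one hrow hw hw1 hrec)
  rw [show (fun _ => w ⬝ᵥ x 0) = 0 + (w ⬝ᵥ x 0) • (1 : Fin N → ℝ) by ext; simp]
  exact (hy.add_const _).congr fun k => sub_add_cancel _ _

theorem stmt16 (N : ℕ) (L : Matrix (Fin N) (Fin N) ℝ)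
    (hrow : L.mulVec (fun _ => 1) = 0)
    (hsimple : algMult L 0 = 1)
    (hre : ∀ lam : ℂ, IsEig L lam → lam ≠ 0 → 0 < lam.re)
    (a : ℕ → ℝ) (amax : ℝ)
    (hpos : ∀ j, 0 < a j) (hbd : ∀ j, a j ≤ amax)
    (hlim : Tendsto a atTop (nhds 0))
    (hdiv : Tendsto (fun M => ∑ j ∈ Finset.range M, a j) atTop atTop)
    (x : ℕ → Fin N → ℝ)
    (hrec : ∀ j, x (j + 1) = x j - a j • L.mulVec (x j)) :
    ∃ c : ℝ, Tendsto x atTop (nhds (fun _ => c)) :=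
  stmt16_general N L hrow hsimple hre a hpos hlim hdiv x hrec
end

section
/- Let C = Cᵀ ∈ ℝ^{n×n} be a nonzero symmetric matrix and F = [[0, C],[−C, 0]] ∈ ℝ^{2n×2n} (block form). Then every nonzero eigenvalue μ of C gives eigenvalues ±iμ of F; in particular F has a nonzero purely imaginary eigenvalue, and consequently I − F is not strictly pseudocontractive: there is no κ ∈ (0,1) and symmetric positive definite P with (1−κ)(I−F)ᵀP(I−F) ⪯ (1+κ)P − κ((I−F)ᵀP + P(I−F)). -/
open Matrix Filter Finset Polynomial

lemma my_eval_charpoly {m : Type*} [Fintype m] [DecidableEq m] (M : Matrix m m ℂ) (t : ℂ) :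
    M.charpoly.eval t = (t • (1 : Matrix m m ℂ) - M).det := by
  rw [Matrix.charpoly, ← Polynomial.coe_evalRingHom, RingHom.map_det]
  congr 1
  ext i j
  by_cases h : i = j <;>
    simp [charmatrix_apply, Matrix.diagonal, h, Matrix.one_apply, mul_comm]

lemma isEig_iff {m : Type*} [Fintype m] [DecidableEq m] (A : Matrix m m ℝ) (lam : ℂ) :
    IsEig A lam ↔ ∃ v : m → ℂ, v ≠ 0 ∧ (cmat A) *ᵥ v = lam • v := by
  rw [IsEig, Polynomial.IsRoot, my_eval_charpoly, ← Matrix.exists_mulVec_eq_zero_iff]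
  constructor
  · rintro ⟨v, hv, h⟩
    refine ⟨v, hv, ?_⟩
    rw [Matrix.sub_mulVec, Matrix.smul_mulVec, Matrix.one_mulVec, sub_eq_zero] at h
    exact h.symm
  · rintro ⟨v, hv, h⟩
    refine ⟨v, hv, ?_⟩
    rw [Matrix.sub_mulVec, Matrix.smul_mulVec, Matrix.one_mulVec, h, sub_self]

lemma cmat_fromBlocks {n : ℕ} (C : Matrix (Fin n) (Fin n) ℝ) :
    cmat (Matrix.fromBlocks 0 C (-C) 0) =
      Matrix.fromBlocks 0 (cmat C) (-(cmat C)) 0 := by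
  have h1 : ((-C).map fun a => ((a : ℝ) : ℂ)) = -(C.map fun a => ((a : ℝ) : ℂ)) := by
    ext i j; simp
  simp only [cmat, Matrix.fromBlocks_map, h1]
  congr 1 <;> ext i j <;> simp

lemma eigvec_fromBlocks {n : ℕ} (D : Matrix (Fin n) (Fin n) ℂ) (z : Fin n → ℂ) (mu e : ℂ)
    (he : e * e = -1) (h : D *ᵥ z = mu • z) :
    (Matrix.fromBlocks 0 D (-D) 0) *ᵥ (Sum.elim z (e • z)) =
      (mu * e) • (Sum.elim z (e • z)) := by
  rw [Matrix.fromBlocks_mulVec]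
  funext i
  rcases i with i | i
  · simp only [Sum.elim_comp_inl, Sum.elim_comp_inr, Matrix.zero_mulVec,
      Matrix.mulVec_smul, h, Sum.elim_inl, Pi.add_apply,
      Pi.zero_apply, zero_add, Pi.smul_apply, smul_eq_mul]
    ring
  · simp only [Sum.elim_comp_inl, Sum.elim_comp_inr, Matrix.neg_mulVec, h,
      Matrix.mulVec_smul, Matrix.zero_mulVec, Sum.elim_inr, Pi.add_apply,
      Pi.neg_apply, Pi.zero_apply, add_zero, Pi.smul_apply, smul_eq_mul]
    have : mu * e * (e * z i) = mu * (e * e) * z i := by ring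
    rw [this, he]; ring

lemma isEig_F {n : ℕ} (C : Matrix (Fin n) (Fin n) ℝ) (z : Fin n → ℂ) (hz : z ≠ 0)
    (mu e : ℂ) (he : e * e = -1) (h : (cmat C) *ᵥ z = mu • z) :
    IsEig (Matrix.fromBlocks 0 C (-C) 0) (mu * e) := by
  rw [isEig_iff]
  refine ⟨Sum.elim z (e • z), ?_, ?_⟩
  · intro hcon
    apply hz
    funext i
    exact congrFun hcon (Sum.inl i)
  · rw [cmat_fromBlocks]
    exact eigvec_fromBlocks (cmat C) z mu e he h

theorem stmt17 (n : ℕ) (C : Matrix (Fin n) (Fin n) ℝ)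
    (hsym : Cᵀ = C) (hC : C ≠ 0) :
    (∀ mu : ℝ, IsEig C (mu : ℂ) → mu ≠ 0 →
        IsEig (Matrix.fromBlocks 0 C (-C) 0) ((mu : ℂ) * Complex.I) ∧
        IsEig (Matrix.fromBlocks 0 C (-C) 0) (-((mu : ℂ) * Complex.I))) ∧
      (∃ lam : ℂ, IsEig (Matrix.fromBlocks 0 C (-C) 0) lam ∧ lam.re = 0 ∧ lam ≠ 0) ∧
      ¬(∃ k ∈ Set.Ioo (0 : ℝ) 1,
        ∃ P : Matrix (Fin n ⊕ Fin n) (Fin n ⊕ Fin n) ℝ, P.PosDef ∧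
          ((1 + k) • P -
            k • ((1 - Matrix.fromBlocks 0 C (-C) 0)ᵀ * P +
              P * (1 - Matrix.fromBlocks 0 C (-C) 0)) -
            (1 - k) • ((1 - Matrix.fromBlocks 0 C (-C) 0)ᵀ * P *
              (1 - Matrix.fromBlocks 0 C (-C) 0))).PosSemidef) := by
  -- real symmetric eigenvector with nonzero eigenvalue
  have hH : C.IsHermitian := by
    rw [Matrix.IsHermitian, Matrix.conjTranspose_eq_transpose_of_trivial]; exact hsym
  obtain ⟨w, mu0, hmu0, hw0, hCw⟩ := hH.exists_eigenvector_of_ne_zero hC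
  refine ⟨?_, ?_, ?_⟩
  · -- part 1
    intro mu hmu hmune
    rw [isEig_iff] at hmu
    obtain ⟨z, hz, hzeq⟩ := hmu
    constructor
    · exact isEig_F C z hz _ Complex.I Complex.I_mul_I hzeq
    · have : -((mu : ℂ) * Complex.I) = (mu : ℂ) * (-Complex.I) := by ring
      rw [this]
      refine isEig_F C z hz _ (-Complex.I) ?_ hzeq
      rw [neg_mul_neg]
      exact Complex.I_mul_I
  · -- part 2
    refine ⟨(mu0 : ℂ) * Complex.I, ?_, by simp, by simp [hmu0, Complex.I_ne_zero]⟩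
    have hzc : (cmat C) *ᵥ (fun j => (w j : ℂ)) = (mu0 : ℂ) • (fun j => (w j : ℂ)) := by
      funext j
      have := congrFun hCw j
      simp only [Matrix.mulVec, dotProduct, Pi.smul_apply, smul_eq_mul, cmat,
        Matrix.map_apply] at this ⊢
      exact_mod_cast this
    refine isEig_F C _ ?_ _ Complex.I Complex.I_mul_I hzc
    intro hcon
    apply hw0
    funext j
    have := congrFun hcon j
    simpa using this
  · -- part 3
    rintro ⟨k, ⟨hk0, hk1⟩, P, hP, hpsd⟩
    set F : Matrix (Fin n ⊕ Fin n) (Fin n ⊕ Fin n) ℝ := Matrix.fromBlocks 0 C (-C) 0 with hF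
    set B : Matrix (Fin n ⊕ Fin n) (Fin n ⊕ Fin n) ℝ := 1 - F with hB
    set u : Fin n ⊕ Fin n → ℝ := Sum.elim w 0 with hu
    set v : Fin n ⊕ Fin n → ℝ := Sum.elim 0 w with hv
    have hune : u ≠ 0 := fun h => hw0 (funext fun i => congrFun h (Sum.inl i))
    have hvne : v ≠ 0 := fun h => hw0 (funext fun i => congrFun h (Sum.inr i))
    have hBu : B *ᵥ u = u + mu0 • v := by
      rw [hB, Matrix.sub_mulVec, Matrix.one_mulVec, hF, Matrix.fromBlocks_mulVec]
      funext i
      rcases i with i | i <;>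
        simp [hu, hv, Matrix.neg_mulVec, hCw]
    have hBv : B *ᵥ v = v + (-mu0) • u := by
      rw [hB, Matrix.sub_mulVec, Matrix.one_mulVec, hF, Matrix.fromBlocks_mulVec]
      funext i
      rcases i with i | i <;>
        simp [hu, hv, Matrix.neg_mulVec, hCw]
    -- quadratic form
    set g : (Fin n ⊕ Fin n → ℝ) → (Fin n ⊕ Fin n → ℝ) → ℝ := fun x y => x ⬝ᵥ (P *ᵥ y) with hg
    have hPt : Pᵀ = P := by
      have := hP.1
      rwa [Matrix.IsHermitian, Matrix.conjTranspose_eq_transpose_of_trivial] at this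
    have hgsym : ∀ x y, g x y = g y x := by
      intro x y
      show x ⬝ᵥ P *ᵥ y = y ⬝ᵥ P *ᵥ x
      rw [Matrix.dotProduct_mulVec,
        show x ᵥ* P = P *ᵥ x by rw [← Matrix.vecMul_transpose, hPt],
        dotProduct_comm]
    have quad : ∀ x : Fin n ⊕ Fin n → ℝ,
        x ⬝ᵥ (((1 + k) • P - k • (Bᵀ * P + P * B) - (1 - k) • (Bᵀ * P * B)) *ᵥ x) =
          (1 + k) * g x x - k * (g (B *ᵥ x) x + g x (B *ᵥ x)) -
            (1 - k) * g (B *ᵥ x) (B *ᵥ x) := by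
      intro x
      simp only [Matrix.sub_mulVec, Matrix.add_mulVec, Matrix.smul_mulVec,
        dotProduct_sub, dotProduct_add, dotProduct_smul, smul_eq_mul,
        ← Matrix.mulVec_mulVec, hg]
      have h1 : x ⬝ᵥ (Bᵀ *ᵥ (P *ᵥ x)) = (B *ᵥ x) ⬝ᵥ (P *ᵥ x) := by
        rw [Matrix.dotProduct_mulVec, Matrix.vecMul_transpose]
      have h2 : x ⬝ᵥ (Bᵀ *ᵥ (P *ᵥ (B *ᵥ x))) = (B *ᵥ x) ⬝ᵥ (P *ᵥ (B *ᵥ x)) := by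
        rw [Matrix.dotProduct_mulVec, Matrix.vecMul_transpose]
      rw [h1, h2]
    have hquadu := quad u
    have hquadv := quad v
    rw [hBu] at hquadu
    rw [hBv] at hquadv
    -- bilinearity expansions
    have gadd_l : ∀ (c : ℝ) x y z, g (x + c • y) z = g x z + c * g y z := by
      intro c x y z
      simp [hg, add_dotProduct, smul_dotProduct, smul_eq_mul]
    have gadd_r : ∀ (c : ℝ) x y z, g z (x + c • y) = g z x + c * g z y := by
      intro c x y z
      simp [hg, Matrix.mulVec_add, Matrix.mulVec_smul, dotProduct_add,
        dotProduct_smul, smul_eq_mul]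
    have hguv := hgsym u v
    have e1 : g (u + mu0 • v) u = g u u + mu0 * g v u := gadd_l mu0 u v u
    have e2 : g u (u + mu0 • v) = g u u + mu0 * g u v := gadd_r mu0 u v u
    have e3 : g (u + mu0 • v) (u + mu0 • v) =
        g u u + mu0 * g u v + mu0 * (g v u + mu0 * g v v) := by
      rw [gadd_l, gadd_r, gadd_r]
    have f1 : g (v + (-mu0) • u) v = g v v + (-mu0) * g u v := gadd_l (-mu0) v u v
    have f2 : g v (v + (-mu0) • u) = g v v + (-mu0) * g v u := gadd_r (-mu0) v u v
    have f3 : g (v + (-mu0) • u) (v + (-mu0) • u) =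
        g v v + (-mu0) * g v u + (-mu0) * (g u v + (-mu0) * g u u) := by
      rw [gadd_l, gadd_r, gadd_r]
    have hpos_u : 0 ≤ u ⬝ᵥ (((1 + k) • P - k • (Bᵀ * P + P * B) - (1 - k) • (Bᵀ * P * B)) *ᵥ u) := by
      have := hpsd.dotProduct_mulVec_nonneg u
      simpa using this
    have hpos_v : 0 ≤ v ⬝ᵥ (((1 + k) • P - k • (Bᵀ * P + P * B) - (1 - k) • (Bᵀ * P * B)) *ᵥ v) := by
      have := hpsd.dotProduct_mulVec_nonneg v
      simpa using this
    rw [hquadu, e1, e2, e3] at hpos_u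
    rw [hquadv, f1, f2, f3] at hpos_v
    have hguupos : 0 < g u u := by
      have := hP.dotProduct_mulVec_pos hune
      simpa [hg] using this
    have hgvvpos : 0 < g v v := by
      have := hP.dotProduct_mulVec_pos hvne
      simpa [hg] using this
    have hmusq : 0 < mu0 ^ 2 := by positivity
    nlinarith [hpos_u, hpos_v, hguupos, hgvvpos, hmusq, hguv,
      mul_pos (mul_pos (sub_pos.mpr hk1) hmusq) (add_pos hguupos hgvvpos)]
end

section
/- Let B ∈ ℝ^{n×n} be nonexpansive in a P-induced norm (BᵀPB ⪯ P, P ≻ 0) with ker(I−B) nonempty, and let (β_k) be a sequence in (0,1] with β_k → 0 and Σ β_k = ∞. Then for every x(0), the iteration x(k+1) = (1−β_k)x(k) + β_k B x(k) converges to a point of ker(I−B). -/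
open Matrix Filter Finset Polynomial

/-!
Write `P = SᵀS`. The change of variables `y = S x` turns `‖·‖_P` into the Euclidean norm and `B`
into a nonexpansive operator `T`. Nonexpansiveness forces `T*` to fix every fixed point of `T`, so
the orthogonal complement of `F = ker (1 - T)` is `T`-invariant: the iteration leaves the
`F`-component of `y 0` unchanged and acts on the `Fᗮ`-component `w` alone. On `Fᗮ` the map `1 - T`
is injective, so `‖w - T w‖ ≥ δ ‖w‖`, and the identity
`‖(1 - β) w + β T w‖² = (1 - β) ‖w‖² + β ‖T w‖² - β (1 - β) ‖w - T w‖²`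
gives `‖w (k+1)‖² ≤ (1 - δ² β_k (1 - β_k)) ‖w k‖²`. As `β_k → 0` and `∑ β_k = ∞`, also
`∑ β_k (1 - β_k) = ∞`, hence `w k → 0`.
-/

open Topology

theorem tendsto_zero_of_le_one_sub_mul_s19 {a t : ℕ → ℝ} (ha : ∀ k, 0 ≤ a k)
    (hstep : ∀ k, a (k + 1) ≤ (1 - t k) * a k)
    (ht : Tendsto (fun n => ∑ k ∈ Finset.range n, t k) atTop atTop) :
    Tendsto a atTop (𝓝 0) := by
  have hbound : ∀ n, a n ≤ a 0 * Real.exp (-∑ k ∈ Finset.range n, t k) := by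
    intro n
    induction n with
    | zero => simp
    | succ n ih =>
      calc a (n + 1) ≤ (1 - t n) * a n := hstep n
        _ ≤ Real.exp (-t n) * a n := by
          gcongr
          · exact ha n
          · linarith [Real.add_one_le_exp (-t n)]
        _ ≤ Real.exp (-t n) * (a 0 * Real.exp (-∑ k ∈ Finset.range n, t k)) := by gcongr
        _ = a 0 * Real.exp (-∑ k ∈ Finset.range (n + 1), t k) := by
          rw [Finset.sum_range_succ, neg_add, Real.exp_add]; ring
  have hexp : Tendsto (fun n => a 0 * Real.exp (-∑ k ∈ Finset.range n, t k)) atTop (𝓝 0) := by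
    simpa using (Real.tendsto_exp_atBot.comp (tendsto_neg_atTop_atBot.comp ht)).const_mul (a 0)
  exact squeeze_zero ha hbound hexp

theorem tendsto_sum_range_mul_one_sub_atTop {b : ℕ → ℝ} (hb : ∀ k, b k ∈ Set.Icc (0 : ℝ) 1)
    (hlim : Tendsto b atTop (𝓝 0))
    (hdiv : Tendsto (fun n => ∑ k ∈ Finset.range n, b k) atTop atTop) :
    Tendsto (fun n => ∑ k ∈ Finset.range n, b k * (1 - b k)) atTop atTop := by
  have hnonneg : ∀ k, 0 ≤ b k * (1 - b k) := fun k =>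
    mul_nonneg (hb k).1 (sub_nonneg.mpr (hb k).2)
  rw [← not_summable_iff_tendsto_nat_atTop_of_nonneg hnonneg]
  rw [← not_summable_iff_tendsto_nat_atTop_of_nonneg fun k => (hb k).1] at hdiv
  -- once `b k ≤ 1 / 2`, we have `b k ≤ 2 * (b k * (1 - b k))`
  refine fun hsum => hdiv (hsum.mul_left 2 |>.of_norm_bounded_eventually_nat ?_)
  filter_upwards [hlim.eventually (ge_mem_nhds (by norm_num : (0 : ℝ) < 1 / 2))] with k hk
  rw [Real.norm_of_nonneg (hb k).1]
  nlinarith [(hb k).1]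

section

variable {E : Type*} [NormedAddCommGroup E] [InnerProductSpace ℝ E]

theorem norm_sq_one_sub_smul_add_smul (b : ℝ) (u v : E) :
    ‖(1 - b) • u + b • v‖ ^ 2 = (1 - b) * ‖u‖ ^ 2 + b * ‖v‖ ^ 2 - b * (1 - b) * ‖u - v‖ ^ 2 := by
  rw [norm_add_sq_real, norm_sub_sq_real, norm_smul, norm_smul, real_inner_smul_left,
    real_inner_smul_right, mul_pow, mul_pow, Real.norm_eq_abs, Real.norm_eq_abs, sq_abs, sq_abs]
  ring

variable {T : E →ₗ[ℝ] E}

theorem norm_sq_mann_step_le (hT : ∀ v, ‖T v‖ ≤ ‖v‖) {b δ : ℝ} (hb : b ∈ Set.Icc (0 : ℝ) 1)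
    (hδ : 0 ≤ δ) {u : E} (hu : δ * ‖u‖ ≤ ‖u - T u‖) :
    ‖(1 - b) • u + b • T u‖ ^ 2 ≤ (1 - δ ^ 2 * (b * (1 - b))) * ‖u‖ ^ 2 := by
  have hTu : ‖T u‖ ^ 2 ≤ ‖u‖ ^ 2 := pow_le_pow_left₀ (norm_nonneg _) (hT u) 2
  have hlow : (δ * ‖u‖) ^ 2 ≤ ‖u - T u‖ ^ 2 := pow_le_pow_left₀ (by positivity) hu 2
  have hb' : 0 ≤ b * (1 - b) := mul_nonneg hb.1 (sub_nonneg.mpr hb.2)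
  rw [norm_sq_one_sub_smul_add_smul]
  nlinarith [mul_le_mul_of_nonneg_left hlow hb', mul_le_mul_of_nonneg_left hTu hb.1]

variable [FiniteDimensional ℝ E]

theorem exists_pos_mul_norm_le_norm_apply_of_mem_orthogonal_ker
    {G : Type*} [NormedAddCommGroup G] [NormedSpace ℝ G] (f : E →ₗ[ℝ] G) :
    ∃ δ > 0, ∀ w ∈ (LinearMap.ker f)ᗮ, δ * ‖w‖ ≤ ‖f w‖ := by
  set K := (LinearMap.ker f)ᗮ
  have hinj : Function.Injective (f ∘ₗ K.subtype) := by
    rw [← LinearMap.ker_eq_bot, LinearMap.ker_eq_bot']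
    intro w hw
    exact Subtype.ext <| (Submodule.mem_orthogonal' _ _).mp w.2 w hw |> inner_self_eq_zero.mp
  obtain ⟨C, hC, hanti⟩ := (f ∘ₗ K.subtype).injective_iff_antilipschitz.mp hinj
  refine ⟨(C : ℝ)⁻¹, by positivity, fun w hw => ?_⟩
  have := hanti.le_mul_dist ⟨w, hw⟩ 0
  simp only [dist_zero_right, map_zero, Submodule.coe_norm, LinearMap.comp_apply,
    Submodule.subtype_apply] at this
  rw [inv_mul_le_iff₀ (by positivity)]
  exact_mod_cast this

theorem LinearMap.adjoint_apply_eq_self_of_apply_eq_self (hT : ∀ v, ‖T v‖ ≤ ‖v‖) {v : E}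
    (hv : T v = v) : LinearMap.adjoint T v = v := by
  set u := LinearMap.adjoint T v
  have hinner : inner ℝ u v = ‖v‖ ^ 2 := by
    rw [LinearMap.adjoint_inner_left, hv, real_inner_self_eq_norm_sq]
  have hu : ‖u‖ ^ 2 ≤ ‖u‖ * ‖v‖ :=
    calc ‖u‖ ^ 2 = inner ℝ (T u) v := by
          rw [← real_inner_self_eq_norm_sq]; exact LinearMap.adjoint_inner_right T u v
      _ ≤ ‖T u‖ * ‖v‖ := real_inner_le_norm _ _
      _ ≤ ‖u‖ * ‖v‖ := by gcongr; exact hT u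
  have : ‖u - v‖ ^ 2 ≤ 0 := by
    rw [norm_sub_sq_real, hinner]
    nlinarith [sq_nonneg (‖u‖ - ‖v‖)]
  exact sub_eq_zero.mp (norm_eq_zero.mp (by nlinarith [norm_nonneg (u - v)]))

theorem LinearMap.apply_mem_orthogonal_ker_one_sub (hT : ∀ v, ‖T v‖ ≤ ‖v‖) {w : E}
    (hw : w ∈ (LinearMap.ker (1 - T))ᗮ) : T w ∈ (LinearMap.ker (1 - T))ᗮ := by
  rw [Submodule.mem_orthogonal] at hw ⊢
  intro v hv
  have hTv : T v = v := (sub_eq_zero.mp (LinearMap.mem_ker.mp hv)).symm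
  rw [← LinearMap.adjoint_inner_left, T.adjoint_apply_eq_self_of_apply_eq_self hT hTv]
  exact hw v hv

theorem LinearMap.exists_apply_eq_self_tendsto_mann (hT : ∀ v, ‖T v‖ ≤ ‖v‖) {b : ℕ → ℝ}
    (hb : ∀ k, b k ∈ Set.Icc (0 : ℝ) 1) (hlim : Tendsto b atTop (𝓝 0))
    (hdiv : Tendsto (fun n => ∑ k ∈ Finset.range n, b k) atTop atTop) {y : ℕ → E}
    (hrec : ∀ k, y (k + 1) = (1 - b k) • y k + b k • T (y k)) :
    ∃ p, T p = p ∧ Tendsto y atTop (𝓝 p) := by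
  set F := LinearMap.ker (1 - T)
  set p := F.starProjection (y 0)
  have hTp : T p = p :=
    (sub_eq_zero.mp (LinearMap.mem_ker.mp (F.starProjection_apply_mem (y 0)))).symm
  have hrec' : ∀ k, y (k + 1) - p = (1 - b k) • (y k - p) + b k • T (y k - p) := by
    intro k
    rw [hrec, map_sub, hTp]
    module
  have hmem : ∀ k, y k - p ∈ Fᗮ := by
    intro k
    induction k with
    | zero => exact F.sub_starProjection_mem_orthogonal (y 0)
    | succ k ih =>
      rw [hrec']
      exact Fᗮ.add_mem (Fᗮ.smul_mem _ ih)
        (Fᗮ.smul_mem _ (apply_mem_orthogonal_ker_one_sub hT ih))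
  obtain ⟨δ, hδ, hlow⟩ := exists_pos_mul_norm_le_norm_apply_of_mem_orthogonal_ker (1 - T)
  have hstep : ∀ k, ‖y (k + 1) - p‖ ^ 2 ≤ (1 - δ ^ 2 * (b k * (1 - b k))) * ‖y k - p‖ ^ 2 := by
    intro k
    rw [hrec']
    exact norm_sq_mann_step_le hT (hb k) hδ.le (hlow _ (hmem k))
  have hdiv' : Tendsto (fun n => ∑ k ∈ Finset.range n, δ ^ 2 * (b k * (1 - b k))) atTop atTop := by
    simpa only [← mul_sum] using
      (tendsto_sum_range_mul_one_sub_atTop hb hlim hdiv).const_mul_atTop (by positivity)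
  have hsq : Tendsto (fun k => ‖y k - p‖ ^ 2) atTop (𝓝 0) :=
    tendsto_zero_of_le_one_sub_mul_s19 (fun k => sq_nonneg _) hstep hdiv'
  refine ⟨p, hTp, ?_⟩
  rw [← tendsto_sub_nhds_zero_iff, tendsto_zero_iff_norm_tendsto_zero]
  simpa using hsq.sqrt

theorem LinearMap.exists_apply_eq_self_tendsto_mann_of_linearEquiv
    {V : Type*} [NormedAddCommGroup V] [NormedSpace ℝ V] (e : V ≃ₗ[ℝ] E) {f : V →ₗ[ℝ] V}
    (hf : ∀ v, ‖e (f v)‖ ≤ ‖e v‖) {b : ℕ → ℝ}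
    (hb : ∀ k, b k ∈ Set.Icc (0 : ℝ) 1) (hlim : Tendsto b atTop (𝓝 0))
    (hdiv : Tendsto (fun n => ∑ k ∈ Finset.range n, b k) atTop atTop) {x : ℕ → V}
    (hrec : ∀ k, x (k + 1) = (1 - b k) • x k + b k • f (x k)) :
    ∃ q, f q = q ∧ Tendsto x atTop (𝓝 q) := by
  have : FiniteDimensional ℝ V := e.symm.finiteDimensional
  obtain ⟨p, hp, hy⟩ := (e.conj f).exists_apply_eq_self_tendsto_mann
    (fun v => by simpa [LinearEquiv.conj_apply] using hf (e.symm v)) hb hlim hdiv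
    (y := fun k => e (x k)) (fun k => by simp [hrec, LinearEquiv.conj_apply])
  refine ⟨e.symm p, e.injective (by simpa [LinearEquiv.conj_apply] using hp), ?_⟩
  simpa [Function.comp_def] using
    ((e.symm : E →ₗ[ℝ] V).continuous_of_finiteDimensional.tendsto p).comp hy

end

open scoped MatrixOrder in
theorem Matrix.PosDef.exists_linearEquiv_norm_sq_eq_qf {m : Type*} [Fintype m] [DecidableEq m]
    {P : Matrix m m ℝ} (hP : P.PosDef) :
    ∃ e : (m → ℝ) ≃ₗ[ℝ] EuclideanSpace ℝ m, ∀ v, ‖e v‖ ^ 2 = qf P v := by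
  obtain ⟨S, rfl⟩ := CStarAlgebra.nonneg_iff_eq_star_mul_self.mp hP.posSemidef.nonneg
  have hnorm : ∀ v, ‖WithLp.toLp 2 (S *ᵥ v)‖ ^ 2 = qf (star S * S) v := by
    intro v
    rw [EuclideanSpace.real_norm_sq_eq, qf, ← mulVec_mulVec, dotProduct_mulVec,
      star_eq_conjTranspose, conjTranspose_eq_transpose_of_trivial, vecMul_transpose, dotProduct]
    simp only [sq]
  have hinj : Function.Injective (mulVecLin S) := by
    rw [← LinearMap.ker_eq_bot, LinearMap.ker_eq_bot']
    intro v hv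
    by_contra hne
    have := hP.dotProduct_mulVec_pos hne
    rw [mulVecLin_apply] at hv
    rw [← mulVec_mulVec, hv, mulVec_zero, dotProduct_zero] at this
    exact lt_irrefl _ this
  exact ⟨(LinearEquiv.ofInjectiveEndo _ hinj).trans (WithLp.linearEquiv 2 ℝ (m → ℝ)).symm,
    hnorm⟩

theorem qf_mulVec_le {m : Type*} [Fintype m] {B P : Matrix m m ℝ}
    (h : (P - Bᵀ * P * B).PosSemidef) (v : m → ℝ) : qf P (B *ᵥ v) ≤ qf P v := by
  have := h.dotProduct_mulVec_nonneg v
  rw [star_trivial, sub_mulVec, dotProduct_sub, sub_nonneg, ← mulVec_mulVec, ← mulVec_mulVec,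
    dotProduct_mulVec v Bᵀ, vecMul_transpose] at this
  exact this

theorem stmt19_general (n : ℕ) (B P : Matrix (Fin n) (Fin n) ℝ)
    (hP : P.PosDef) (hNE : (P - Bᵀ * P * B).PosSemidef)
    (b : ℕ → ℝ) (hb : ∀ j, b j ∈ Set.Ioc (0 : ℝ) 1)
    (hlim : Tendsto b atTop (nhds 0))
    (hdiv : Tendsto (fun M => ∑ j ∈ Finset.range M, b j) atTop atTop)
    (x : ℕ → Fin n → ℝ)
    (hrec : ∀ j, x (j + 1) = (1 - b j) • x j + b j • B.mulVec (x j)) :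
    ∃ xbar : Fin n → ℝ, (1 - B).mulVec xbar = 0 ∧
      Tendsto x atTop (nhds xbar) := by
  obtain ⟨e, he⟩ := hP.exists_linearEquiv_norm_sq_eq_qf
  have hB : ∀ v, ‖e (mulVecLin B v)‖ ≤ ‖e v‖ := fun v =>
    (pow_le_pow_iff_left₀ (norm_nonneg _) (norm_nonneg _) two_ne_zero).mp
      (by rw [he, he]; exact qf_mulVec_le hNE v)
  obtain ⟨q, hq, hx⟩ := LinearMap.exists_apply_eq_self_tendsto_mann_of_linearEquiv e hB
    (fun k => Set.Ioc_subset_Icc_self (hb k)) hlim hdiv hrec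
  refine ⟨q, ?_, hx⟩
  rw [sub_mulVec, one_mulVec, ← mulVecLin_apply, hq, sub_self]

theorem stmt19 (n : ℕ) (B P : Matrix (Fin n) (Fin n) ℝ)
    (hP : P.PosDef) (hNE : (P - Bᵀ * P * B).PosSemidef)
    (hfix : ∃ v : Fin n → ℝ, (1 - B).mulVec v = 0)
    (b : ℕ → ℝ) (hb : ∀ j, b j ∈ Set.Ioc (0 : ℝ) 1)
    (hlim : Tendsto b atTop (nhds 0))
    (hdiv : Tendsto (fun M => ∑ j ∈ Finset.range M, b j) atTop atTop)
    (x : ℕ → Fin n → ℝ)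
    (hrec : ∀ j, x (j + 1) = (1 - b j) • x j + b j • B.mulVec (x j)) :
    ∃ xbar : Fin n → ℝ, (1 - B).mulVec xbar = 0 ∧
      Tendsto x atTop (nhds xbar) :=
  stmt19_general n B P hP hNE b hb hlim hdiv x hrec
end
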